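/- Let (Aₖ), (Bₖ) be nonnegative sequences and suppose Q(xₖ₋₁) - Q(xₖ) ≥ -δₖ·cₖ₋₁·Aₖ₋₁ + cₖ·Aₖ + Bₖ for all k ≥ 1, where Q is bounded below, 0 ≤ δₖ ≤ δ < 1, cₖ ≥ c > 0, and A₀ = 0. Then Σₖ ((1-δ)·c·Aₖ + Bₖ) < ∞. -/
import Mathlib


theorem stmt17 (n : ℕ) (Q : EuclideanSpace ℝ (Fin n) → ℝ) (m : ℝ)
    (hbdd : ∀ y, m ≤ Q y) (x : ℕ → EuclideanSpace ℝ (Fin n))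
    (A B δ c : ℕ → ℝ) (δbar cmin : ℝ)
    (hA : ∀ k, 0 ≤ A k) (hB : ∀ k, 0 ≤ B k)
    (hδ0 : ∀ k, 0 ≤ δ k) (hδ : ∀ k, δ k ≤ δbar) (hδbar : δbar < 1)
    (hc : 0 < cmin) (hck : ∀ k, cmin ≤ c k) (hA0 : A 0 = 0)
    (hrec : ∀ k, Q (x k) - Q (x (k + 1)) ≥
      -(δ (k + 1) * c k * A k) + c (k + 1) * A (k + 1) + B (k + 1)) :
    Summable (fun k => (1 - δbar) * cmin * A k + B k) := by
  have hδ' : 0 < 1 - δbar := by linarith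
  have key : ∀ N, ∑ k ∈ Finset.range N, ((1 - δbar) * cmin * A k + B (k + 1))
      + c N * A N ≤ Q (x 0) - Q (x N) := by
    intro N
    induction N with
    | zero => simp [hA0]
    | succ N ih =>
      rw [Finset.sum_range_succ]
      have h1 := hrec N
      have h2 : (1 - δbar) * cmin * A N ≤ (1 - δ (N + 1)) * c N * A N := by
        have hcc : (1 - δbar) * cmin ≤ (1 - δ (N + 1)) * c N :=
          mul_le_mul (by linarith [hδ (N + 1)]) (hck N) hc.le (by linarith [hδ (N + 1)])
        exact mul_le_mul_of_nonneg_right hcc (hA N)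
      linarith
  have hkey2 : ∀ N, ∑ k ∈ Finset.range N, ((1 - δbar) * cmin * A k + B (k + 1))
      ≤ Q (x 0) - m := by
    intro N
    have h1 := key N
    have h2 := hbdd (x N)
    nlinarith [mul_nonneg (hc.le.trans (hck N)) (hA N)]
  have hBsum : ∀ N, ∑ k ∈ Finset.range N, B k ≤ (∑ k ∈ Finset.range N, B (k + 1)) + B 0 := by
    intro N
    match N with
    | 0 => simpa using hB 0
    | (M + 1) =>
      rw [Finset.sum_range_succ' B M, Finset.sum_range_succ (fun k => B (k + 1)) M]
      linarith [hB (M + 1)]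
  apply summable_of_sum_range_le (c := Q (x 0) - m + B 0)
  · intro k
    have := mul_nonneg (mul_nonneg hδ'.le hc.le) (hA k)
    have := hB k
    linarith
  · intro N
    have h1 := hkey2 N
    have h2 := hBsum N
    rw [Finset.sum_add_distrib] at h1 ⊢
    linarith
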